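/- arXiv:2108.08026 — 3 statements merged into one kernel-verified Lean document; each statement's English description precedes it below -/
import Mathlib

section
/- Let X_ε(x) = X⁰(x) + ε X¹(x) + O(ε²) be a C² family of vector fields on ℝⁿ, suppose the unperturbed system ẋ = X⁰(x) has a T-periodic solution γ(t), and suppose F : U → ℝ is a C³ first integral of X⁰ (i.e. dF(X⁰) = 0) on a neighborhood U of the orbit Γ = {γ(t) : t ∈ [0,T)}. If for ε > 0 small the perturbed system ẋ = X_ε(x) has a T_ε-periodic solution γ_ε depending C²-smoothly on ε with T₀ = T and γ₀ = γ, then the integral 𝓘 = ∫₀^T dF(X¹)(γ(t)) dt equals zero. -/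
/-! Differentiate the perturbed family `γ_ε` in `ε` at `ε = 0`. The variation
`v = ∂_ε γ_ε |_{ε=0}` solves the variational equation `v' = X¹(γ) + DX⁰(γ) v`, and since `F` is a
first integral of `X⁰`, `t ↦ dF(γ t)(v t)` has derivative `dF(X¹)(γ t)`; hence the integral equals
`dF(γ 0)(v T - v 0)`. Differentiating the periodicity `γ_ε(T_ε) = γ_ε(0)` gives
`v T - v 0 = -T'(0) X⁰(γ 0)`, which `dF` annihilates. -/

open MeasureTheory intervalIntegral Set Filter Function Topology

variable {E G : Type*} [NormedAddCommGroup E] [NormedSpace ℝ E]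
  [NormedAddCommGroup G] [NormedSpace ℝ G]

theorem HasDerivAt.eq_of_eqOn_Ico {f g : ℝ → G} {f' g' : G} {a b : ℝ} (hab : a < b)
    (hf : HasDerivAt f f' a) (hg : HasDerivAt g g' a) (hfg : EqOn f g (Ico a b)) : f' = g' :=
  (uniqueDiffOn_Ici a a self_mem_Ici).eq_deriv _ hf.hasDerivWithinAt <|
    hg.hasDerivWithinAt.congr_of_eventuallyEq (eventuallyEq_of_mem (Ico_mem_nhdsGE hab) hfg)
      (hfg ⟨le_rfl, hab⟩)

theorem HasFDerivAt.hasDerivAt_partial_fst {f : ℝ × E → G} {f' : ℝ × E →L[ℝ] G} {a : ℝ} {x : E}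
    (hf : HasFDerivAt f f' (a, x)) : HasDerivAt (fun s => f (s, x)) (f' (1, 0)) a :=
  hf.comp_hasDerivAt a ((hasDerivAt_id' a).prodMk (hasDerivAt_const a x))

theorem HasFDerivAt.hasDerivAt_partial_snd {f : E × ℝ → G} {f' : E × ℝ →L[ℝ] G} {x : E} {b : ℝ}
    (hf : HasFDerivAt f f' (x, b)) : HasDerivAt (fun s => f (x, s)) (f' (0, 1)) b :=
  hf.comp_hasDerivAt b ((hasDerivAt_const b x).prodMk (hasDerivAt_id' b))

theorem fderiv_uncurry_apply {X : ℝ → E → G} {a : ℝ} {x : E}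
    (h : DifferentiableAt ℝ (uncurry X) (a, x)) (s : ℝ) (u : E) :
    fderiv ℝ (uncurry X) (a, x) (s, u) = s • deriv (fun ε => X ε x) a + fderiv ℝ (X a) x u := by
  have hfst : HasDerivAt (fun ε => X ε x) (fderiv ℝ (uncurry X) (a, x) (1, 0)) a :=
    h.hasFDerivAt.hasDerivAt_partial_fst
  have hsnd : HasFDerivAt (X a) ((fderiv ℝ (uncurry X) (a, x)).comp (.inr ℝ ℝ E)) x :=
    h.hasFDerivAt.comp x (hasFDerivAt_prodMk_right a x)
  have hsplit : ((s, u) : ℝ × E) = s • (1, 0) + (0, u) := by simp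
  rw [hfst.deriv, hsnd.fderiv, hsplit, map_add, map_smul]
  rfl

theorem ContDiff.continuous_of_hasDerivAt_fst {X : ℝ → E → G} {X₁ : E → G} {a : ℝ}
    (hX : ContDiff ℝ 1 (uncurry X)) (hX₁ : ∀ x, HasDerivAt (fun ε => X ε x) (X₁ x) a) :
    Continuous X₁ := by
  have hd := hX.differentiable one_ne_zero
  have : X₁ = fun x => fderiv ℝ (uncurry X) (a, x) (1, 0) :=
    funext fun x => (hX₁ x).unique (hd (a, x)).hasFDerivAt.hasDerivAt_partial_fst
  rw [this]
  exact ((hX.continuous_fderiv one_ne_zero).comp (continuous_const.prodMk continuous_id)).clm_apply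
    continuous_const

theorem hasDerivAt_variation {Φ : ℝ × ℝ → E} {X : ℝ × E → E} {ε₀ : ℝ} (hε₀ : 0 < ε₀)
    (hΦ : ContDiff ℝ 2 Φ) (hX : Differentiable ℝ X)
    (hsol : ∀ ε ∈ Ico 0 ε₀, ∀ t, HasDerivAt (fun s => Φ (ε, s)) (X (ε, Φ (ε, t))) t) (t : ℝ) :
    HasDerivAt (fun s => fderiv ℝ Φ (0, s) (1, 0))
      (fderiv ℝ X (0, Φ (0, t)) (1, fderiv ℝ Φ (0, t) (1, 0))) t := by
  have hΦd : Differentiable ℝ Φ := hΦ.differentiable two_ne_zero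
  have hΦ'd : Differentiable ℝ (fderiv ℝ Φ) :=
    (hΦ.fderiv_right (m := 1) le_rfl).differentiable one_ne_zero
  have hsymm : fderiv ℝ (fderiv ℝ Φ) (0, t) (0, 1) (1, 0) =
      fderiv ℝ (fderiv ℝ Φ) (0, t) (1, 0) (0, 1) :=
    hΦ.contDiffAt.isSymmSndFDerivAt (by simp) _ _
  -- `∂_ε ∂_t Φ` is computed by differentiating the equation `∂_t Φ = X(ε, Φ)` for `ε ≥ 0`.
  have hmixed : fderiv ℝ (fderiv ℝ Φ) (0, t) (1, 0) (0, 1) =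
      fderiv ℝ X (0, Φ (0, t)) (1, fderiv ℝ Φ (0, t) (1, 0)) := by
    refine HasDerivAt.eq_of_eqOn_Ico hε₀ ?_
      ((hX _).hasFDerivAt.comp_hasDerivAt 0
        ((hasDerivAt_id' 0).prodMk (hΦd (0, t)).hasFDerivAt.hasDerivAt_partial_fst))
      (fun ε hε => (hΦd (ε, t)).hasFDerivAt.hasDerivAt_partial_snd.unique (hsol ε hε t))
    simpa using (hΦ'd (0, t)).hasFDerivAt.hasDerivAt_partial_fst.clm_apply
      (hasDerivAt_const 0 ((0, 1) : ℝ × ℝ))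
  refine ((hΦ'd (0, t)).hasFDerivAt.hasDerivAt_partial_snd.clm_apply
    (hasDerivAt_const t ((1, 0) : ℝ × ℝ))).congr_deriv ?_
  simp [hsymm, hmixed]

theorem fderiv_fderiv_apply_of_fderiv_apply_eq_zero {F : E → ℝ} {V : E → E} {x : E}
    (hF : ContDiffAt ℝ 2 F x) (hV : DifferentiableAt ℝ V x)
    (hint : ∀ᶠ y in 𝓝 x, fderiv ℝ F y (V y) = 0) (u : E) :
    fderiv ℝ (fderiv ℝ F) x (V x) u = -fderiv ℝ F x (fderiv ℝ V x u) := by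
  have hF' : DifferentiableAt ℝ (fderiv ℝ F) x :=
    (hF.fderiv_right (m := 1) le_rfl).differentiableAt one_ne_zero
  have hcomb := hF'.hasFDerivAt.clm_apply hV.hasFDerivAt
  have hzero : HasFDerivAt (fun y => fderiv ℝ F y (V y)) (0 : E →L[ℝ] ℝ) x :=
    (hasFDerivAt_const 0 x).congr_of_eventuallyEq hint
  have h := congr($(hcomb.unique hzero) u)
  simp only [add_apply, ContinuousLinearMap.comp_apply,
    ContinuousLinearMap.flip_apply, zero_apply] at h
  rw [hF.isSymmSndFDerivAt (by simp)]
  linarith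

theorem hasDerivAt_fderiv_apply_of_fderiv_apply_eq_zero {F : E → ℝ} {V : E → E} {γ v : ℝ → E}
    {w : E} {t : ℝ} (hF : ContDiffAt ℝ 2 F (γ t)) (hV : DifferentiableAt ℝ V (γ t))
    (hint : ∀ᶠ y in 𝓝 (γ t), fderiv ℝ F y (V y) = 0)
    (hγ : HasDerivAt γ (V (γ t)) t) (hv : HasDerivAt v (w + fderiv ℝ V (γ t) (v t)) t) :
    HasDerivAt (fun s => fderiv ℝ F (γ s) (v s)) (fderiv ℝ F (γ t) w) t := by
  have hF' : DifferentiableAt ℝ (fderiv ℝ F) (γ t) :=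
    (hF.fderiv_right (m := 1) le_rfl).differentiableAt one_ne_zero
  refine ((hF'.hasFDerivAt.comp_hasDerivAt t hγ).clm_apply hv).congr_deriv ?_
  rw [comp_apply, fderiv_fderiv_apply_of_fderiv_apply_eq_zero hF hV hint, map_add]
  abel

theorem variation_add_smul_eq_of_periodic {Φ : ℝ × ℝ → E} {τ : ℝ → ℝ} {ε₀ : ℝ} {w : E}
    (hε₀ : 0 < ε₀) (hΦ : Differentiable ℝ Φ) (hτ : DifferentiableAt ℝ τ 0)
    (hw : HasDerivAt (fun t => Φ (0, t)) w (τ 0)) (hper : ∀ ε ∈ Ico 0 ε₀, Φ (ε, τ ε) = Φ (ε, 0)) :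
    fderiv ℝ Φ (0, τ 0) (1, 0) + deriv τ 0 • w = fderiv ℝ Φ (0, 0) (1, 0) := by
  have h := HasDerivAt.eq_of_eqOn_Ico hε₀
    ((hΦ _).hasFDerivAt.comp_hasDerivAt 0 ((hasDerivAt_id' 0).prodMk hτ.hasDerivAt))
    (hΦ _).hasFDerivAt.hasDerivAt_partial_fst hper
  have hsplit : ((1, deriv τ 0) : ℝ × ℝ) = (1, 0) + deriv τ 0 • (0, 1) := by simp
  rwa [hsplit, map_add, map_smul, (hΦ _).hasFDerivAt.hasDerivAt_partial_snd.unique hw] at h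

theorem stmt0_general (n : ℕ)
    (X : ℝ → (Fin n → ℝ) → (Fin n → ℝ))
    (hX : ContDiff ℝ 2 (fun q : ℝ × (Fin n → ℝ) => X q.1 q.2))
    (hXx : ∀ ε : ℝ, ContDiff ℝ 3 (X ε))
    (X0 X1 : (Fin n → ℝ) → (Fin n → ℝ))
    (hX0 : ∀ x, X0 x = X 0 x)
    (hX1 : ∀ x, HasDerivAt (fun ε => X ε x) (X1 x) 0)
    (T : ℝ)
    (γ : ℝ → Fin n → ℝ)
    (hγ : ∀ t, HasDerivAt γ (X0 (γ t)) t)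
    (hper : ∀ t, γ (t + T) = γ t)
    (U : Set (Fin n → ℝ)) (hU : IsOpen U) (hΓU : ∀ t, γ t ∈ U)
    (F : (Fin n → ℝ) → ℝ) (hF : ContDiffOn ℝ 3 F U)
    (hFint : ∀ x ∈ U, fderiv ℝ F x (X0 x) = 0)
    (ε0 : ℝ) (hε0 : 0 < ε0)
    (γε : ℝ → ℝ → Fin n → ℝ) (Tε : ℝ → ℝ)
    (hsm : ContDiff ℝ 2 (fun q : ℝ × ℝ => γε q.1 q.2))
    (hTsm : ContDiff ℝ 2 Tε)
    (hγε0 : γε 0 = γ) (hTε0 : Tε 0 = T)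
    (hsol : ∀ ε ∈ Set.Ico (0:ℝ) ε0, ∀ t, HasDerivAt (γε ε) (X ε (γε ε t)) t)
    (hperε : ∀ ε ∈ Set.Ico (0:ℝ) ε0, ∀ t, γε ε (t + Tε ε) = γε ε t) :
    ∫ t in (0:ℝ)..T, fderiv ℝ F (γ t) (X1 (γ t)) = 0 := by
  obtain rfl : X0 = X 0 := funext hX0
  set v : ℝ → Fin n → ℝ := fun t => fderiv ℝ (fun q : ℝ × ℝ => γε q.1 q.2) (0, t) (1, 0)
  have hXd : Differentiable ℝ (uncurry X) := hX.differentiable two_ne_zero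
  have hv : ∀ t, HasDerivAt v (X1 (γ t) + fderiv ℝ (X 0) (γ t) (v t)) t := fun t =>
    (hasDerivAt_variation hε0 hsm hXd hsol t).congr_deriv <| by
      simp [v, fderiv_uncurry_apply (hXd _), (hX1 _).deriv, hγε0]
  have hg : ∀ t, HasDerivAt (fun s => fderiv ℝ F (γ s) (v s)) (fderiv ℝ F (γ t) (X1 (γ t))) t :=
    fun t => hasDerivAt_fderiv_apply_of_fderiv_apply_eq_zero
      ((hF.contDiffAt (hU.mem_nhds (hΓU t))).of_le (by norm_num))
      ((hXx 0).differentiable (by norm_num) _)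
      (eventually_of_mem (hU.mem_nhds (hΓU t)) hFint) (hγ t) (hv t)
  have hγc : Continuous γ := continuous_iff_continuousAt.2 fun t => (hγ t).continuousAt
  have hcont : Continuous fun t => fderiv ℝ F (γ t) (X1 (γ t)) :=
    ((hF.continuousOn_fderiv_of_isOpen hU (by norm_num)).comp_continuous hγc hΓU).clm_apply
      (((hX.of_le one_le_two).continuous_of_hasDerivAt_fst hX1).comp hγc)
  have hγT : γ T = γ 0 := by simpa using hper 0
  have hvper : v T + deriv Tε 0 • X 0 (γ 0) = v 0 := by
    have := variation_add_smul_eq_of_periodic hε0 (hsm.differentiable two_ne_zero)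
      (hTsm.differentiable two_ne_zero 0) (by simpa [hTε0, hγε0] using hγ T)
      fun ε hε => by simpa using hperε ε hε 0
    rwa [hTε0, hγT] at this
  rw [integral_eq_sub_of_hasDerivAt (fun t _ => hg t) (hcont.intervalIntegrable 0 T), ← hvper,
    hγT, map_add, map_smul, hFint _ (hΓU 0)]
  simp

/-- Persistence of a periodic orbit implies vanishing of the integral
`∫₀^T dF(X¹)(γ(t)) dt` (Theorem 2.1 / `thm:main2`). -/
theorem stmt0 (n : ℕ)
    (X : ℝ → (Fin n → ℝ) → (Fin n → ℝ))
    (hX : ContDiff ℝ 2 (fun q : ℝ × (Fin n → ℝ) => X q.1 q.2))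
    (hXx : ∀ ε : ℝ, ContDiff ℝ 3 (X ε))
    (X0 X1 : (Fin n → ℝ) → (Fin n → ℝ))
    (hX0 : ∀ x, X0 x = X 0 x)
    (hX1 : ∀ x, HasDerivAt (fun ε => X ε x) (X1 x) 0)
    (T : ℝ) (hT : 0 < T)
    (γ : ℝ → Fin n → ℝ)
    (hγ : ∀ t, HasDerivAt γ (X0 (γ t)) t)
    (hper : ∀ t, γ (t + T) = γ t)
    (U : Set (Fin n → ℝ)) (hU : IsOpen U) (hΓU : ∀ t, γ t ∈ U)
    (F : (Fin n → ℝ) → ℝ) (hF : ContDiffOn ℝ 3 F U)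
    (hFnc : ∃ x ∈ U, ∃ y ∈ U, F x ≠ F y)
    (hFint : ∀ x ∈ U, fderiv ℝ F x (X0 x) = 0)
    (ε0 : ℝ) (hε0 : 0 < ε0)
    (γε : ℝ → ℝ → Fin n → ℝ) (Tε : ℝ → ℝ)
    (hsm : ContDiff ℝ 2 (fun q : ℝ × ℝ => γε q.1 q.2))
    (hTsm : ContDiff ℝ 2 Tε)
    (hγε0 : γε 0 = γ) (hTε0 : Tε 0 = T)
    (hsol : ∀ ε ∈ Set.Ico (0:ℝ) ε0, ∀ t, HasDerivAt (γε ε) (X ε (γε ε t)) t)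
    (hperε : ∀ ε ∈ Set.Ico (0:ℝ) ε0, ∀ t, γε ε (t + Tε ε) = γε ε t) :
    ∫ t in (0:ℝ)..T, fderiv ℝ F (γ t) (X1 (γ t)) = 0 :=
  stmt0_general n X hX hXx X0 X1 hX0 hX1 T γ hγ hper U hU hΓU F hF hFint ε0 hε0 γε Tε hsm hTsm hγε0
    hTε0 hsol hperε
end

section
/- Let X_ε = X⁰ + ε X¹ + O(ε²) be a C² family of vector fields on ℝⁿ. Suppose ẋ = X⁰(x) has a hyperbolic equilibrium p and a homoclinic orbit γʰ(t) to p (i.e. γʰ(t) → p as t → ±∞), and a C³ first integral F on a neighborhood of the closure of the homoclinic orbit. If for ε > 0 small the system ẋ = X_ε(x) has a C³ first integral F_ε depending C²-smoothly on ε with F₀ = F on that neighborhood, then the improper integral ∫_{−∞}^{∞} dF(X¹)(γʰ(t)) dt converges (as a limit of integrals over [T_{−k}, T_k] for any sequences T_{±k} → ±∞) and equals zero. -/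
/-!
Write `G := ∂_ε F_ε |_{ε=0}`. Differentiating the identity `dF_ε(X_ε) = 0`, valid for
`ε ∈ [0, ε₀)`, at `ε = 0` from the right and using the symmetry of the second derivative of
`(ε, x) ↦ F_ε x` gives `dF(X¹) = -dG(X⁰)` on `U`. Along the homoclinic orbit the integrand is
therefore the derivative of `-G ∘ γʰ`, so `∫_{a}^{b} dF(X¹)(γʰ) = G(γʰ a) - G(γʰ b)`, which tends to
`G p - G p = 0` since `γʰ → p` at both ends and `G` is continuous at `p`.
-/

open MeasureTheory intervalIntegral Set Filter Topology ContinuousLinearMap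

section

variable {E F : Type*} [NormedAddCommGroup E] [NormedSpace ℝ E]
  [NormedAddCommGroup F] [NormedSpace ℝ F]

theorem HasDerivAt.eq_zero_of_eqOn_Ico {h : ℝ → F} {h' : F} {ε₀ : ℝ} (hh : HasDerivAt h h' 0)
    (hε₀ : 0 < ε₀) (hzero : EqOn h 0 (Ico 0 ε₀)) : h' = 0 := by
  have hIco : Ico 0 ε₀ ∈ 𝓝[≥] (0 : ℝ) := Ico_mem_nhdsGE hε₀
  have hconst : HasDerivWithinAt h 0 (Ici 0) 0 :=
    (hasDerivWithinAt_const (0 : ℝ) (Ici 0) (0 : F)).congr_of_eventuallyEq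
      (eventually_of_mem hIco hzero) (hzero ⟨le_rfl, hε₀⟩)
  exact (uniqueDiffOn_Ici 0 0 self_mem_Ici).eq_deriv _ hh.hasDerivWithinAt hconst

theorem fderiv_apply_eq_fderiv_prod_inr {f : ℝ × E → F} {ε : ℝ} {x : E}
    (hf : DifferentiableAt ℝ f (ε, x)) (v : E) :
    fderiv ℝ (fun y => f (ε, y)) x v = fderiv ℝ f (ε, x) (0, v) := by
  have h : HasFDerivAt (fun y => f (ε, y)) ((fderiv ℝ f (ε, x)).comp (inr ℝ ℝ E)) x :=
    hf.hasFDerivAt.comp x (hasFDerivAt_prodMk_right ε x)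
  rw [h.fderiv]
  rfl

noncomputable def paramDeriv (f : ℝ × E → F) (y : E) : F :=
  fderiv ℝ f (0, y) (1, 0)

theorem hasFDerivAt_paramDeriv {f : ℝ × E → F} {x : E} (hf : ContDiffAt ℝ 2 f (0, x)) :
    HasFDerivAt (paramDeriv f)
      (((fderiv ℝ (fderiv ℝ f) (0, x)).comp (inr ℝ ℝ E)).flip (1, 0)) x := by
  have hdiff : DifferentiableAt ℝ (fderiv ℝ f) (0, x) :=
    (hf.fderiv_right (m := 1) le_rfl).differentiableAt one_ne_zero
  show HasFDerivAt (fun y => fderiv ℝ f (0, y) (1, 0)) _ x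
  simpa using (hdiff.hasFDerivAt.comp x (hasFDerivAt_prodMk_right (0 : ℝ) x)).clm_apply
    (hasFDerivAt_const ((1 : ℝ), (0 : E)) x)

theorem fderiv_add_fderiv_paramDeriv_eq_zero {f : ℝ × E → F} {X : ℝ → E} {v x : E} {ε₀ : ℝ}
    (hf : ContDiffAt ℝ 2 f (0, x)) (hX : HasDerivAt X v 0) (hε₀ : 0 < ε₀)
    (hinv : ∀ ε ∈ Ico 0 ε₀, fderiv ℝ f (ε, x) (0, X ε) = 0) :
    fderiv ℝ f (0, x) (0, v) + fderiv ℝ (paramDeriv f) x (X 0) = 0 := by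
  have hdiff : DifferentiableAt ℝ (fderiv ℝ f) (0, x) :=
    (hf.fderiv_right (m := 1) le_rfl).differentiableAt one_ne_zero
  have hpath : HasDerivAt (fun ε : ℝ => fderiv ℝ f (ε, x)) (fderiv ℝ (fderiv ℝ f) (0, x) (1, 0)) 0 :=
    hdiff.hasFDerivAt.comp_hasDerivAt 0 ((hasDerivAt_id 0).prodMk (hasDerivAt_const 0 x))
  have hsymm := hf.isSymmSndFDerivAt (by simp) (1, 0) (0, X 0)
  have h := (hpath.clm_apply ((hasDerivAt_const 0 (0 : ℝ)).prodMk hX)).eq_zero_of_eqOn_Ico hε₀ hinv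
  rw [(hasFDerivAt_paramDeriv hf).fderiv]
  simpa [hsymm, add_comm] using h

theorem continuous_of_hasDerivAt_param {X : ℝ → E → F}
    (hX : ContDiff ℝ 1 (fun q : ℝ × E => X q.1 q.2)) {X₁ : E → F}
    (hX₁ : ∀ x, HasDerivAt (fun ε => X ε x) (X₁ x) 0) : Continuous X₁ := by
  have hX₁_eq : X₁ = fun x => fderiv ℝ (fun q : ℝ × E => X q.1 q.2) (0, x) (1, 0) := by
    funext x
    have h := (hX.differentiable one_ne_zero (0, x)).hasFDerivAt.comp_hasDerivAt 0
        ((hasDerivAt_id (0 : ℝ)).prodMk (hasDerivAt_const 0 x))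
    exact (hX₁ x).unique h
  rw [hX₁_eq]
  exact ((hX.continuous_fderiv one_ne_zero).comp (continuous_const.prodMk continuous_id)).clm_apply
    continuous_const

end

theorem tendsto_intervalIntegral_of_hasDerivAt_of_tendsto {E ι : Type*} [NormedAddCommGroup E]
    [NormedSpace ℝ E] [CompleteSpace E] {φ ψ : ℝ → E} {c : E}
    (hφ : ∀ t, HasDerivAt φ (ψ t) t) (hψ : Continuous ψ)
    (hbot : Tendsto φ atBot (𝓝 c)) (htop : Tendsto φ atTop (𝓝 c))
    {l : Filter ι} {a b : ι → ℝ} (ha : Tendsto a l atBot) (hb : Tendsto b l atTop) :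
    Tendsto (fun k => ∫ t in a k..b k, ψ t) l (𝓝 0) := by
  have hftc : ∀ k, ∫ t in a k..b k, ψ t = φ (b k) - φ (a k) := fun k =>
    integral_eq_sub_of_hasDerivAt (fun t _ => hφ t) (hψ.intervalIntegrable _ _)
  simpa only [hftc, sub_self, Function.comp_apply] using (htop.comp hb).sub (hbot.comp ha)

theorem stmt2_general (n : ℕ)
    (X : ℝ → (Fin n → ℝ) → (Fin n → ℝ))
    (hX : ContDiff ℝ 2 (fun q : ℝ × (Fin n → ℝ) => X q.1 q.2))
    (X0 X1 : (Fin n → ℝ) → (Fin n → ℝ))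
    (hX0 : ∀ x, X0 x = X 0 x)
    (hX1 : ∀ x, HasDerivAt (fun ε => X ε x) (X1 x) 0)
    (p : Fin n → ℝ)
    (γh : ℝ → Fin n → ℝ)
    (hγh : ∀ t, HasDerivAt γh (X0 (γh t)) t)
    (hhomp : Tendsto γh atTop (nhds p)) (hhomm : Tendsto γh atBot (nhds p))
    (U : Set (Fin n → ℝ)) (hU : IsOpen U) (hΓU : ∀ t, γh t ∈ U) (hpU : p ∈ U)
    (F : (Fin n → ℝ) → ℝ) (hF : ContDiffOn ℝ 3 F U)
    (ε0 : ℝ) (hε0 : 0 < ε0)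
    (Fε : ℝ → (Fin n → ℝ) → ℝ)
    (hFεsm : ContDiffOn ℝ 2 (fun q : ℝ × (Fin n → ℝ) => Fε q.1 q.2) (Set.univ ×ˢ U))
    (hFε0 : ∀ x ∈ U, Fε 0 x = F x)
    (hFεint : ∀ ε ∈ Set.Ico (0:ℝ) ε0, ∀ x ∈ U, fderiv ℝ (Fε ε) x (X ε x) = 0) :
    ∀ a b : ℕ → ℝ, Tendsto a atTop atBot → Tendsto b atTop atTop →
      Tendsto (fun k => ∫ t in (a k)..(b k), fderiv ℝ F (γh t) (X1 (γh t)))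
        atTop (nhds 0) := by
  intro a b ha hb
  set f : ℝ × (Fin n → ℝ) → ℝ := fun q => Fε q.1 q.2
  set G := paramDeriv f
  have hf : ∀ ε, ∀ x ∈ U, ContDiffAt ℝ 2 f (ε, x) := fun ε x hx =>
    hFεsm.contDiffAt (prod_mem_nhds univ_mem (hU.mem_nhds hx))
  have hmelnikov : ∀ x ∈ U, fderiv ℝ F x (X1 x) = -fderiv ℝ G x (X0 x) := by
    intro x hx
    have hpartial : ∀ ε, ∀ v, fderiv ℝ (Fε ε) x v = fderiv ℝ f (ε, x) (0, v) := fun ε =>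
      fderiv_apply_eq_fderiv_prod_inr ((hf ε x hx).differentiableAt two_ne_zero)
    have hF_eq : Fε 0 =ᶠ[𝓝 x] F := eventually_of_mem (hU.mem_nhds hx) hFε0
    have h := fderiv_add_fderiv_paramDeriv_eq_zero (hf 0 x hx) (hX1 x) hε0
      fun ε hε => (hpartial ε _).symm.trans (hFεint ε hε x hx)
    rw [← hpartial, hF_eq.fderiv_eq, ← hX0] at h
    exact eq_neg_of_add_eq_zero_left h
  have hGγ : ∀ t, HasDerivAt (fun s => -G (γh s)) (fderiv ℝ F (γh t) (X1 (γh t))) t := by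
    intro t
    have hG := hasFDerivAt_paramDeriv (hf 0 _ (hΓU t))
    rw [hmelnikov _ (hΓU t), hG.fderiv]
    exact (hG.comp_hasDerivAt t (hγh t)).neg
  have hγ : Continuous γh := continuous_iff_continuousAt.2 fun t => (hγh t).continuousAt
  have hintegrand : Continuous fun t => fderiv ℝ F (γh t) (X1 (γh t)) :=
    ((hF.continuousOn_fderiv_of_isOpen hU (by norm_num)).comp_continuous hγ hΓU).clm_apply
      ((continuous_of_hasDerivAt_param (hX.of_le (by norm_num)) hX1).comp hγ)
  have hGp : Tendsto (fun y => -G y) (𝓝 p) (𝓝 (-G p)) :=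
    (hasFDerivAt_paramDeriv (hf 0 p hpU)).continuousAt.neg.tendsto
  exact tendsto_intervalIntegral_of_hasDerivAt_of_tendsto hGγ hintegrand
    (hGp.comp hhomm) (hGp.comp hhomp) ha hb

/-- Persistence of a first integral near a homoclinic orbit to a hyperbolic
equilibrium implies convergence and vanishing of
`∫_{-∞}^{∞} dF(X¹)(γʰ(t)) dt` (Theorem 2.4 / `thm:main4`, equilibrium case). -/
theorem stmt2 (n : ℕ)
    (X : ℝ → (Fin n → ℝ) → (Fin n → ℝ))
    (hX : ContDiff ℝ 2 (fun q : ℝ × (Fin n → ℝ) => X q.1 q.2))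
    (hXx : ∀ ε : ℝ, ContDiff ℝ 3 (X ε))
    (X0 X1 : (Fin n → ℝ) → (Fin n → ℝ))
    (hX0 : ∀ x, X0 x = X 0 x)
    (hX1 : ∀ x, HasDerivAt (fun ε => X ε x) (X1 x) 0)
    (p : Fin n → ℝ) (hp : X0 p = 0)
    (A : Matrix (Fin n) (Fin n) ℝ)
    (hA : ∀ i j, A i j = fderiv ℝ X0 p (Pi.single j 1) i)
    (hhyp : ∀ z ∈ spectrum ℂ (A.map (Complex.ofReal)), z.re ≠ 0)
    (γh : ℝ → Fin n → ℝ)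
    (hγh : ∀ t, HasDerivAt γh (X0 (γh t)) t)
    (hhomp : Tendsto γh atTop (nhds p)) (hhomm : Tendsto γh atBot (nhds p))
    (hnc : ∃ t, γh t ≠ p)
    (U : Set (Fin n → ℝ)) (hU : IsOpen U) (hΓU : ∀ t, γh t ∈ U) (hpU : p ∈ U)
    (F : (Fin n → ℝ) → ℝ) (hF : ContDiffOn ℝ 3 F U)
    (hFint : ∀ x ∈ U, fderiv ℝ F x (X0 x) = 0)
    (ε0 : ℝ) (hε0 : 0 < ε0)
    (Fε : ℝ → (Fin n → ℝ) → ℝ)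
    (hFεsm : ContDiffOn ℝ 2 (fun q : ℝ × (Fin n → ℝ) => Fε q.1 q.2) (Set.univ ×ˢ U))
    (hFεx : ∀ ε : ℝ, ContDiffOn ℝ 3 (Fε ε) U)
    (hFε0 : ∀ x ∈ U, Fε 0 x = F x)
    (hFεint : ∀ ε ∈ Set.Ico (0:ℝ) ε0, ∀ x ∈ U, fderiv ℝ (Fε ε) x (X ε x) = 0) :
    ∀ a b : ℕ → ℝ, Tendsto a atTop atBot → Tendsto b atTop atTop →
      Tendsto (fun k => ∫ t in (a k)..(b k), fderiv ℝ F (γh t) (X1 (γh t)))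
        atTop (nhds 0) :=
  stmt2_general n X hX X0 X1 hX0 hX1 p γh hγh hhomp hhomm U hU hΓU hpU F hF ε0 hε0 Fε hFεsm hFε0
    hFεint
end

section
/- Consider the time-periodic planar system ẋ = J DH(x) + ε g(x,t) where H is C³, g is C² and T-periodic in t, and J is the 2×2 standard symplectic matrix. Suppose the unperturbed Hamiltonian system ẋ = J DH(x) has a periodic orbit q^α(t) of period T^α satisfying the resonance l T^α = m T with l, m coprime positive integers. If the autonomized system on ℝ² × (ℝ/Tℤ) has a C³ first integral F_ε(x,θ) = H(x) + O(ε) depending C²-smoothly on ε in a neighborhood of the orbit {(q^α(t−τ₀), t mod T)}, then there is a connected open set Π ⊂ ℝ/Tℤ containing τ₀ on which the subharmonic Melnikov function M^{m/l}(τ) = ∫₀^{mT} DH(q^α(t))·g(q^α(t), t+τ) dt vanishes identically. -/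
open MeasureTheory intervalIntegral Set

/-!
Along the shifted orbit `γ t = (qα (t - τ), t)`, which stays in `U` for `t ∈ [0, mT]` and all `τ`
near `τ₀` by compactness, the first-integral identity reads
`d/dt Fε(γ t) = -ε ∂ₓFε(γ t) (g (γ t))`. By the resonance `l Tα = m T`, `γ (mT)` and `γ 0` differ
by a period of `Fε` in `θ`, so integrating over `[0, mT]` and dividing by `ε` gives
`∫ ∂ₓFε · g = 0` for `0 < ε < ε₀`. Letting `ε → 0` and using `F₀ = H` on `U` yields
`∫₀^{mT} DH(qα (t - τ)) (g (qα (t - τ)) t) dt = 0`, which is the Melnikov integral after the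
substitution `t ↦ t + τ` and `mT`-periodicity of the integrand.
-/

open Filter Function Topology
open scoped Interval

section PartialDerivatives

variable {𝕜 : Type*} [NontriviallyNormedField 𝕜] {E F G : Type*}
  [NormedAddCommGroup E] [NormedSpace 𝕜 E] [NormedAddCommGroup F] [NormedSpace 𝕜 F]
  [NormedAddCommGroup G] [NormedSpace 𝕜 G]

theorem fderiv_comp_prodMk_left_apply {f : E × F → G} {a : E} {b : F}
    (h : DifferentiableAt 𝕜 f (a, b)) (u : E) :
    fderiv 𝕜 (fun x => f (x, b)) a u = fderiv 𝕜 f (a, b) (u, 0) := by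
  have h' : HasFDerivAt (fun x => f (x, b))
      ((fderiv 𝕜 f (a, b)).comp (ContinuousLinearMap.inl 𝕜 E F)) a :=
    h.hasFDerivAt.comp a (hasFDerivAt_prodMk_left a b)
  rw [h'.fderiv]
  rfl

theorem fderiv_comp_prodMk_right_apply {f : E × F → G} {a : E} {b : F}
    (h : DifferentiableAt 𝕜 f (a, b)) (v : F) :
    fderiv 𝕜 (fun y => f (a, y)) b v = fderiv 𝕜 f (a, b) (0, v) := by
  have h' : HasFDerivAt (fun y => f (a, y))
      ((fderiv 𝕜 f (a, b)).comp (ContinuousLinearMap.inr 𝕜 E F)) b :=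
    h.hasFDerivAt.comp b (hasFDerivAt_prodMk_right a b)
  rw [h'.fderiv]
  rfl

theorem fderiv_apply_eq_fderiv_apply_inl_of_eqOn {H : E → G} {K : E × F → G} {U : Set (E × F)}
    (hU : IsOpen U) (hK : DifferentiableOn 𝕜 K U) (hKH : EqOn K (H ∘ Prod.fst) U)
    {p : E × F} (hp : p ∈ U) (v : E) :
    fderiv 𝕜 H p.1 v = fderiv 𝕜 K p (v, 0) := by
  have hnhds : ∀ᶠ x in 𝓝 p.1, (x, p.2) ∈ U :=
    (continuous_id.prodMk continuous_const).continuousAt.preimage_mem_nhds (hU.mem_nhds hp)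
  have hHK : H =ᶠ[𝓝 p.1] fun x => K (x, p.2) := by
    filter_upwards [hnhds] with x hx using (hKH hx).symm
  rw [hHK.fderiv_eq]
  exact fderiv_comp_prodMk_left_apply (hK.differentiableAt (hU.mem_nhds hp)) v

end PartialDerivatives

theorem IsCompact.eventually_mapsTo {X Y Z : Type*} [TopologicalSpace X] [TopologicalSpace Y]
    [TopologicalSpace Z] {f : X → Y → Z} (hf : Continuous (uncurry f)) {K : Set Y}
    (hK : IsCompact K) {U : Set Z} (hU : IsOpen U) {x₀ : X} (h : MapsTo (f x₀) K U) :
    ∀ᶠ x in 𝓝 x₀, MapsTo (f x) K U :=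
  hK.eventually_forall_of_forall_eventually fun _ hy =>
    hf.continuousAt.preimage_mem_nhds (hU.mem_nhds (h hy))

section Integrals

variable {E : Type*} [NormedAddCommGroup E] [NormedSpace ℝ E]

theorem Function.Periodic.intervalIntegral_comp_sub {f : ℝ → E} {c : ℝ} (hf : Periodic f c)
    (a d : ℝ) : ∫ t in a..a + c, f (t - d) = ∫ t in a..a + c, f t := by
  rw [integral_comp_sub_right, show a + c - d = a - d + c by ring]
  exact hf.intervalIntegral_add_eq _ _

theorem continuous_parametric_intervalIntegral_of_continuousOn {X : Type*} [TopologicalSpace X]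
    {f : X → ℝ → E} {a b : ℝ} (hf : ContinuousOn (uncurry f) (univ ×ˢ [[a, b]])) :
    Continuous fun x => ∫ t in a..b, f x t := by
  -- Clamping `t` to `[[a, b]]` makes the integrand globally continuous without changing it there.
  let p : ℝ → ℝ := fun t => projIcc (a ⊓ b) (a ⊔ b) inf_le_sup t
  have hp : ∀ t, p t ∈ [[a, b]] := fun t => (projIcc (a ⊓ b) (a ⊔ b) inf_le_sup t).2
  have hfp : Continuous fun x => ∫ t in a..b, f x (p t) :=
    continuous_parametric_intervalIntegral_of_continuous' (f := fun x t => f x (p t))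
      (hf.comp_continuous (f := fun z : X × ℝ => (z.1, p z.2))
        (continuous_fst.prodMk
          (continuous_subtype_val.comp (continuous_projIcc.comp continuous_snd)))
        fun z => ⟨trivial, hp z.2⟩) a b
  refine hfp.congr fun x => integral_congr fun t ht => ?_
  simp only [p, projIcc_of_mem _ ht]

theorem integral_fderiv_eq_zero_of_fderiv_add_smul_eq_zero {F : E → ℝ} {γ X Y : ℝ → E}
    {a b ε : ℝ} (hε : ε ≠ 0) (hF : ∀ t ∈ [[a, b]], DifferentiableAt ℝ F (γ t))
    (hγ : ∀ t ∈ [[a, b]], HasDerivAt γ (X t) t)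
    (hXY : ∀ t ∈ [[a, b]], fderiv ℝ F (γ t) (X t + ε • Y t) = 0)
    (hY : ContinuousOn (fun t => fderiv ℝ F (γ t) (Y t)) [[a, b]])
    (hab : F (γ b) = F (γ a)) :
    ∫ t in a..b, fderiv ℝ F (γ t) (Y t) = 0 := by
  have hderiv : ∀ t ∈ [[a, b]], HasDerivAt (F ∘ γ) (-(ε * fderiv ℝ F (γ t) (Y t))) t := by
    intro t ht
    have h := (hF t ht).hasFDerivAt.comp_hasDerivAt t (hγ t ht)
    rwa [show X t = (X t + ε • Y t) - ε • Y t by abel, map_sub, hXY t ht, map_smul, zero_sub,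
      smul_eq_mul] at h
  have hFTC := integral_eq_sub_of_hasDerivAt hderiv ((hY.intervalIntegrable).const_mul ε).neg
  rw [comp_apply, comp_apply, hab, sub_self, intervalIntegral.integral_neg,
    intervalIntegral.integral_const_mul, neg_eq_zero] at hFTC
  exact (mul_eq_zero.1 hFTC).resolve_left hε

theorem integral_fderiv_eq_zero_of_perturbed_first_integral {G : ℝ × E → ℝ} {U : Set E}
    (hU : IsOpen U) (hG : ContDiffOn ℝ 1 G (univ ×ˢ U)) {γ X Y : ℝ → E} {a b ε₀ : ℝ}
    (hε₀ : 0 < ε₀) (hγ : ∀ t ∈ [[a, b]], HasDerivAt γ (X t) t) (hγU : MapsTo γ [[a, b]] U)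
    (hY : ContinuousOn Y [[a, b]])
    (hXY : ∀ ε ∈ Ioo 0 ε₀, ∀ t ∈ [[a, b]],
      fderiv ℝ (fun y => G (ε, y)) (γ t) (X t + ε • Y t) = 0)
    (hab : ∀ ε ∈ Ioo 0 ε₀, G (ε, γ b) = G (ε, γ a)) :
    ∫ t in a..b, fderiv ℝ (fun y => G (0, y)) (γ t) (Y t) = 0 := by
  have hGU : IsOpen ((univ : Set ℝ) ×ˢ U) := isOpen_univ.prod hU
  have hGdiff : ∀ ε, ∀ t ∈ [[a, b]], DifferentiableAt ℝ G (ε, γ t) := fun ε t ht =>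
    (hG.differentiableOn one_ne_zero).differentiableAt (hGU.mem_nhds ⟨trivial, hγU ht⟩)
  have hpartial : ∀ ε, EqOn (fun t => fderiv ℝ (fun y => G (ε, y)) (γ t) (Y t))
      (fun t => fderiv ℝ G (ε, γ t) (0, Y t)) [[a, b]] := fun ε t ht =>
    fderiv_comp_prodMk_right_apply (hGdiff ε t ht) _
  have hγc : ContinuousOn γ [[a, b]] := fun t ht => (hγ t ht).continuousAt.continuousWithinAt
  have hcont : ContinuousOn (fun p : ℝ × ℝ => fderiv ℝ G (p.1, γ p.2) (0, Y p.2))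
      (univ ×ˢ [[a, b]]) := by
    refine ContinuousOn.clm_apply ?_ (continuousOn_const.prodMk (hY.comp continuousOn_snd ?_))
    · refine (hG.continuousOn_fderiv_of_isOpen hGU le_rfl).comp
        (continuousOn_fst.prodMk (hγc.comp continuousOn_snd ?_)) ?_
      · exact fun p hp => hp.2
      · exact fun p hp => ⟨trivial, hγU hp.2⟩
    · exact fun p hp => hp.2
  let I : ℝ → ℝ := fun ε => ∫ t in a..b, fderiv ℝ G (ε, γ t) (0, Y t)
  have hI : Continuous I := continuous_parametric_intervalIntegral_of_continuousOn hcont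
  have hI_Ioo : ∀ ε ∈ Ioo 0 ε₀, I ε = 0 := by
    intro ε hε
    have hslice : ContinuousOn (fun t => fderiv ℝ G (ε, γ t) (0, Y t)) [[a, b]] :=
      hcont.comp (continuous_const.prodMk continuous_id).continuousOn fun t ht => ⟨trivial, ht⟩
    change ∫ t in a..b, fderiv ℝ G (ε, γ t) (0, Y t) = 0
    rw [← integral_congr (hpartial ε)]
    exact integral_fderiv_eq_zero_of_fderiv_add_smul_eq_zero hε.1.ne'
      (fun t ht => (hGdiff ε t ht).comp _ (hasFDerivAt_prodMk_right ε (γ t)).differentiableAt)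
      hγ (hXY ε hε) (hslice.congr (hpartial ε)) (hab ε hε)
  have hclosure : closure (Ioo 0 ε₀) ⊆ {ε | I ε = 0} :=
    (isClosed_eq hI continuous_const).closure_subset_iff.2 hI_Ioo
  rw [closure_Ioo hε₀.ne] at hclosure
  rw [integral_congr (hpartial 0)]
  exact hclosure (left_mem_Icc.2 hε₀.le)

end Integrals

theorem stmt11_general
    (H : (Fin 2 → ℝ) → ℝ)
    (g : (Fin 2 → ℝ) → ℝ → (Fin 2 → ℝ))
    (hg : ContDiff ℝ 2 (fun q : (Fin 2 → ℝ) × ℝ => g q.1 q.2))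
    (T : ℝ) (hgper : ∀ x t, g x (t + T) = g x t)
    (JDH : (Fin 2 → ℝ) → (Fin 2 → ℝ))
    (Tα : ℝ)
    (qα : ℝ → Fin 2 → ℝ)
    (hq : ∀ t, HasDerivAt qα (JDH (qα t)) t)
    (hqper : ∀ t, qα (t + Tα) = qα t)
    (l m : ℕ)
    (hres : (l : ℝ) * Tα = (m : ℝ) * T)
    (τ0 : ℝ)
    (U : Set ((Fin 2 → ℝ) × ℝ)) (hU : IsOpen U)
    (hΓU : ∀ t, (qα (t - τ0), t) ∈ U)
    (ε0 : ℝ) (hε0 : 0 < ε0)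
    (Fε : ℝ → (Fin 2 → ℝ) → ℝ → ℝ)
    (hFεsm : ContDiffOn ℝ 2
      (fun q : ℝ × ((Fin 2 → ℝ) × ℝ) => Fε q.1 q.2.1 q.2.2) (Set.univ ×ˢ U))
    (hFεx : ∀ ε : ℝ, ContDiffOn ℝ 3 (fun q : (Fin 2 → ℝ) × ℝ => Fε ε q.1 q.2) U)
    (hFε0 : ∀ x θ, (x, θ) ∈ U → Fε 0 x θ = H x)
    (hFεper : ∀ ε x θ, Fε ε x (θ + T) = Fε ε x θ)
    (hFεint : ∀ ε ∈ Set.Ico (0:ℝ) ε0, ∀ q ∈ U,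
      fderiv ℝ (fun q' : (Fin 2 → ℝ) × ℝ => Fε ε q'.1 q'.2) q
        (JDH q.1 + ε • g q.1 q.2, 1) = 0) :
    ∃ P : Set ℝ, IsOpen P ∧ IsConnected P ∧ τ0 ∈ P ∧
      ∀ τ ∈ P, ∫ t in (0:ℝ)..((m : ℝ) * T),
        fderiv ℝ H (qα t) (g (qα t) (t + τ)) = 0 := by
  have hqN : Periodic qα (m * T) := hres ▸ Periodic.nat_mul hqper l
  have hqc : Continuous qα := continuous_iff_continuousAt.2 fun t => (hq t).continuousAt
  obtain ⟨δ, hδ, hball⟩ := Metric.eventually_nhds_iff_ball.1 <|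
    (isCompact_uIcc (a := 0) (b := m * T)).eventually_mapsTo
      (f := fun τ t => (qα (t - τ), t)) (by fun_prop) hU fun t _ => hΓU t
  refine ⟨Metric.ball τ0 δ, Metric.isOpen_ball, (convex_ball τ0 δ).isConnected
    ⟨τ0, Metric.mem_ball_self hδ⟩, Metric.mem_ball_self hδ, fun τ hτ => ?_⟩
  have hγU := hball τ hτ
  have hwork := integral_fderiv_eq_zero_of_perturbed_first_integral
    (G := fun z => Fε z.1 z.2.1 z.2.2) (γ := fun t => (qα (t - τ), t))
    (X := fun t => (JDH (qα (t - τ)), 1)) (Y := fun t => (g (qα (t - τ)) t, 0))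
    hU (hFεsm.of_le (by norm_num)) hε0
    (fun t _ => ((hq _).comp_sub_const t τ).prodMk (hasDerivAt_id t)) hγU
    ((hg.continuous.comp ((hqc.comp (continuous_id.sub continuous_const)).prodMk
      continuous_id)).prodMk continuous_const).continuousOn
    (fun ε hε t ht => by
      convert hFεint ε ⟨hε.1.le, hε.2⟩ _ (hγU ht) using 2
      exact Prod.ext rfl (by simp))
    (fun ε _ => by
      dsimp only
      rw [sub_eq_neg_add, hqN, (Periodic.nat_mul (hFεper ε _) m).eq, zero_sub])
  have hint : ∫ t in (0:ℝ)..m * T, fderiv ℝ H (qα (t - τ)) (g (qα (t - τ)) t) = 0 := by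
    refine (integral_congr fun t ht => ?_).trans hwork
    exact fderiv_apply_eq_fderiv_apply_inl_of_eqOn hU ((hFεx 0).differentiableOn (by norm_num))
      (fun y hy => hFε0 y.1 y.2 hy) (hγU ht) _
  have hper : Periodic (fun s => fderiv ℝ H (qα s) (g (qα s) (s + τ))) (m * T) := fun s => by
    dsimp only
    rw [hqN s, add_right_comm s, Periodic.nat_mul (hgper (qα s)) m (s + τ)]
  have hshift := hper.intervalIntegral_comp_sub 0 τ
  simp only [zero_add, sub_add_cancel] at hshift
  exact hshift ▸ hint

/-- Relationship with the subharmonic Melnikov method (Theorem 4.3 /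
`thm:sub-mel`): persistence of a first integral `F_ε = H + O(ε)` near a
resonant unperturbed periodic orbit forces the subharmonic Melnikov function to
vanish on a connected open set of phases containing `τ₀`. -/
theorem stmt11
    (H : (Fin 2 → ℝ) → ℝ) (hH : ContDiff ℝ 3 H)
    (g : (Fin 2 → ℝ) → ℝ → (Fin 2 → ℝ))
    (hg : ContDiff ℝ 2 (fun q : (Fin 2 → ℝ) × ℝ => g q.1 q.2))
    (T : ℝ) (hT : 0 < T) (hgper : ∀ x t, g x (t + T) = g x t)
    (JDH : (Fin 2 → ℝ) → (Fin 2 → ℝ))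
    (hJDH : ∀ x, JDH x
      = ![fderiv ℝ H x (Pi.single 1 1), -(fderiv ℝ H x (Pi.single 0 1))])
    (Tα : ℝ) (hTα : 0 < Tα)
    (qα : ℝ → Fin 2 → ℝ)
    (hq : ∀ t, HasDerivAt qα (JDH (qα t)) t)
    (hqper : ∀ t, qα (t + Tα) = qα t)
    (l m : ℕ) (hl : 0 < l) (hm : 0 < m) (hcop : Nat.Coprime l m)
    (hres : (l : ℝ) * Tα = (m : ℝ) * T)
    (τ0 : ℝ)
    (U : Set ((Fin 2 → ℝ) × ℝ)) (hU : IsOpen U)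
    (hΓU : ∀ t, (qα (t - τ0), t) ∈ U)
    (hUper : ∀ x θ, (x, θ) ∈ U → (x, θ + T) ∈ U)
    (ε0 : ℝ) (hε0 : 0 < ε0)
    (Fε : ℝ → (Fin 2 → ℝ) → ℝ → ℝ)
    (hFεsm : ContDiffOn ℝ 2
      (fun q : ℝ × ((Fin 2 → ℝ) × ℝ) => Fε q.1 q.2.1 q.2.2) (Set.univ ×ˢ U))
    (hFεx : ∀ ε : ℝ, ContDiffOn ℝ 3 (fun q : (Fin 2 → ℝ) × ℝ => Fε ε q.1 q.2) U)
    (hFε0 : ∀ x θ, (x, θ) ∈ U → Fε 0 x θ = H x)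
    (hFεper : ∀ ε x θ, Fε ε x (θ + T) = Fε ε x θ)
    (hFεint : ∀ ε ∈ Set.Ico (0:ℝ) ε0, ∀ q ∈ U,
      fderiv ℝ (fun q' : (Fin 2 → ℝ) × ℝ => Fε ε q'.1 q'.2) q
        (JDH q.1 + ε • g q.1 q.2, 1) = 0) :
    ∃ P : Set ℝ, IsOpen P ∧ IsConnected P ∧ τ0 ∈ P ∧
      ∀ τ ∈ P, ∫ t in (0:ℝ)..((m : ℝ) * T),
        fderiv ℝ H (qα t) (g (qα t) (t + τ)) = 0 :=
  stmt11_general H g hg T hgper JDH Tα qα hq hqper l m hres τ0 U hU hΓU ε0 hε0 Fε hFεsm hFεx hFε0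
    hFεper hFεint
end
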